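/- arXiv:1509.02955 — 2 statements merged into one kernel-verified Lean document; each statement's English description precedes it below -/
import Mathlib

section
/- Consider n ≥ 2 nodes each with action space {α, β} and historyless self-independent reaction functions f_i(a) = α if a_{-i} = α^{n-1} and f_i(a) = β otherwise. If in some state at least two nodes have action β, then every fair trajectory from that state converges to the state β^n. -/
/-- One step of historyless dynamics. -/
def step {n : ℕ} (f : Fin n → (Fin n → Bool) → Bool) (s : Finset (Fin n))
    (a : Fin n → Bool) : Fin n → Bool :=
  fun i => if i ∈ s then f i a else a i

/-- The `(a0, σ)`-trajectory. -/
def traj {n : ℕ} (f : Fin n → (Fin n → Bool) → Bool) (σ : ℕ → Finset (Fin n))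
    (a0 : Fin n → Bool) : ℕ → Fin n → Bool
  | 0 => a0
  | t + 1 => step f (σ (t + 1)) (traj f σ a0 t)

/-- A schedule is fair if it activates every node infinitely often. -/
def Fair {n : ℕ} (σ : ℕ → Finset (Fin n)) : Prop :=
  ∀ i : Fin n, ∀ T : ℕ, ∃ t ≥ T, i ∈ σ t

/-- Convergence: eventually constantly `b`. -/
def Converges {n : ℕ} (x : ℕ → Fin n → Bool) (b : Fin n → Bool) : Prop :=
  ∃ T : ℕ, ∀ t > T, x t = b

/-! Once two distinct nodes play `β` (`false`), every node always sees a `β` among the others,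
so every reaction is `β`. The two `β`-nodes therefore keep `β` forever, every other node switches
to `β` the first time it is activated and never leaves it, and fairness activates every node. -/

section

variable {n : ℕ} {f : Fin n → (Fin n → Bool) → Bool}

lemma step_apply_eq_false (hf : ∀ k a, (∃ m ≠ k, a m = false) → f k a = false)
    {s : Finset (Fin n)} {a : Fin n → Bool} {k : Fin n} (hk : ∃ m ≠ k, a m = false)
    (h : k ∈ s ∨ a k = false) : step f s a k = false := by
  unfold step
  split_ifs with hs
  · exact hf k a hk
  · exact h.resolve_left hs

lemma exists_ne_eq_false_of_pair {a : Fin n → Bool} {i j : Fin n} (hij : i ≠ j)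
    (hi : a i = false) (hj : a j = false) (k : Fin n) : ∃ m ≠ k, a m = false := by
  by_cases hki : k = i
  · exact ⟨j, hki ▸ hij.symm, hj⟩
  · exact ⟨i, Ne.symm hki, hi⟩

variable {σ : ℕ → Finset (Fin n)} {a : Fin n → Bool}

lemma traj_apply_pair_eq_false (hf : ∀ k a, (∃ m ≠ k, a m = false) → f k a = false)
    {i j : Fin n} (hij : i ≠ j) (hi : a i = false) (hj : a j = false) (t : ℕ) :
    traj f σ a t i = false ∧ traj f σ a t j = false := by
  induction t with
  | zero => exact ⟨hi, hj⟩
  | succ t ih =>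
    have hβ := exists_ne_eq_false_of_pair hij ih.1 ih.2
    exact ⟨step_apply_eq_false hf (hβ i) (.inr ih.1), step_apply_eq_false hf (hβ j) (.inr ih.2)⟩

section

variable (hf : ∀ k a, (∃ m ≠ k, a m = false) → f k a = false)
  (hβ : ∀ t k, ∃ m ≠ k, traj f σ a t m = false)
include hf hβ

lemma traj_succ_apply_eq_false_of_mem {t : ℕ} {k : Fin n} (hk : k ∈ σ (t + 1)) :
    traj f σ a (t + 1) k = false :=
  step_apply_eq_false hf (hβ t k) (.inl hk)

lemma traj_apply_eq_false_of_le {s t : ℕ} {k : Fin n} (hs : traj f σ a s k = false)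
    (hst : s ≤ t) : traj f σ a t k = false := by
  induction t, hst using Nat.le_induction with
  | base => exact hs
  | succ t _ ih => exact step_apply_eq_false hf (hβ t k) (.inr ih)

end

lemma Fair.exists_activation_le (hσ : Fair σ) : ∃ T, ∀ k, ∃ s ≤ T, k ∈ σ (s + 1) := by
  choose τ hτ hmem using fun k => hσ k 1
  refine ⟨Finset.univ.sup τ, fun k => ⟨τ k - 1, ?_, ?_⟩⟩
  · exact (Nat.sub_le _ _).trans (Finset.le_sup (Finset.mem_univ k))
  · rw [Nat.sub_add_cancel (hτ k)]
    exact hmem k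

end

theorem stmt7_general (n : ℕ)
    (f : Fin n → (Fin n → Bool) → Bool)
    (hf : ∀ (i : Fin n) (a : Fin n → Bool),
      f i a = if ∀ j, j ≠ i → a j = true then true else false)
    (a : Fin n → Bool) (i j : Fin n) (hij : i ≠ j)
    (hi : a i = false) (hj : a j = false)
    (σ : ℕ → Finset (Fin n)) (hσ : Fair σ) :
    Converges (traj f σ a) (fun _ => false) := by
  have hβf : ∀ k b, (∃ m ≠ k, b m = false) → f k b = false := by
    rintro k b ⟨m, hmk, hm⟩
    rw [hf, if_neg]
    exact fun h => by simp [h m hmk] at hm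
  have hβ : ∀ t k, ∃ m ≠ k, traj f σ a t m = false := fun t =>
    have h := traj_apply_pair_eq_false hβf hij hi hj t
    exists_ne_eq_false_of_pair hij h.1 h.2
  obtain ⟨T, hT⟩ := hσ.exists_activation_le
  refine ⟨T, fun t ht => funext fun k => ?_⟩
  obtain ⟨s, hsT, hks⟩ := hT k
  exact traj_apply_eq_false_of_le hβf hβ (traj_succ_apply_eq_false_of_mem hβf hβ hks) (by omega)

/-- `n ≥ 2` nodes with actions `{α, β}` (encoded `α := true`, `β := false`) and
self-independent historyless reaction functions `f i a = α` if `a_{-i} = α^{n-1}` and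
`β` otherwise.  If in some state at least two nodes have action `β`, then every fair
trajectory from that state converges to `β^n`. -/
theorem stmt7 (n : ℕ) (hn : 2 ≤ n)
    (f : Fin n → (Fin n → Bool) → Bool)
    (hf : ∀ (i : Fin n) (a : Fin n → Bool),
      f i a = if ∀ j, j ≠ i → a j = true then true else false)
    (a : Fin n → Bool) (i j : Fin n) (hij : i ≠ j)
    (hi : a i = false) (hj : a j = false)
    (σ : ℕ → Finset (Fin n)) (hσ : Fair σ) :
    Converges (traj f σ a) (fun _ => false) :=
  stmt7_general n f hf a i j hij hi hj σ hσ
end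

section
/- Let k_1,...,k_n ≥ 4. In the 2-recall protocol where a history (a,b) ∈ A² is a 'move-on' history if a ≠ b and a_j − b_j mod k_j ∈ {0,1} for all j, a 'query' history if b_j − a_j mod k_j ∈ {0,1,2} for all j, and a 'repeat' history otherwise, the move-on and query conditions are mutually exclusive, every move-on or repeat history is followed by a query history, and a query history (a,b) is followed by a repeat history only if b is a fixed point of the query response (i.e., every node is best-responding at b). -/
open scoped Classical

variable {n : ℕ}

/-- `α` is a best response of node `i` at state `b`. -/
def IsBR {k : Fin n → ℕ} (u : ∀ i : Fin n, (∀ j, Fin (k j)) → ℝ)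
    (i : Fin n) (α : Fin (k i)) (b : ∀ j, Fin (k j)) : Prop :=
  ∀ β : Fin (k i), u i (Function.update b i β) ≤ u i (Function.update b i α)

/-- A 'move-on' history: `a ≠ b` and `a j − b j (mod k j) ∈ {0,1}` for all `j`. -/
def MoveOn (k : Fin n → ℕ) (a b : ∀ j, Fin (k j)) : Prop :=
  a ≠ b ∧ ∀ j : Fin n,
    ((a j : ℕ) + k j - (b j : ℕ)) % k j = 0 ∨ ((a j : ℕ) + k j - (b j : ℕ)) % k j = 1

/-- A 'query' history: `b j − a j (mod k j) ∈ {0,1,2}` for all `j`. -/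
def Query (k : Fin n → ℕ) (a b : ∀ j, Fin (k j)) : Prop :=
  ∀ j : Fin n,
    ((b j : ℕ) + k j - (a j : ℕ)) % k j = 0 ∨
    ((b j : ℕ) + k j - (a j : ℕ)) % k j = 1 ∨
    ((b j : ℕ) + k j - (a j : ℕ)) % k j = 2

/-!
Write `d j = a j - b j` in `ℤ/k j`. A move-on history has `d ∈ {0, 1}` and `d ≠ 0`, a query
history has `-d ∈ {0, 1, 2}`, and `-1 = k j - 1 ∉ {0, 1, 2}` as `k j ≥ 4`. After a move-on
history, `π a - b = (π a - a) + (a - b)` has coordinates in `{0, 1, 2}`; after a repeat history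
the next pair is `(b, b)`. After a query history every node stays or steps back by one, so
`b - f a b` has coordinates in `{0, 1}`, and it is nonzero as soon as some node is not
best-responding, making `(b, f a b)` a move-on history.
-/

namespace Fin

variable {k : ℕ}

lemma val_sub_eq_add_sub_mod (x y : Fin k) : ((x - y : Fin k) : ℕ) = (x + k - y) % k := by
  rw [val_sub, Nat.add_sub_assoc y.is_lt.le, Nat.add_comm]

lemma val_sub_le_val_sub_add_val_sub [NeZero k] (x y z : Fin k) :
    ((x - z : Fin k) : ℕ) ≤ (x - y : Fin k) + (y - z : Fin k) := by
  rw [← sub_add_sub_cancel x y z, val_add]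
  exact Nat.mod_le _ _

lemma val_sub_sub_one_self [NeZero k] (hk : 2 ≤ k) (x : Fin k) :
    ((x - (x - 1) : Fin k) : ℕ) = 1 := by
  rw [sub_sub_cancel, val_one', Nat.mod_eq_of_lt hk]

lemma sub_one_ne_self [NeZero k] (hk : 2 ≤ k) (x : Fin k) : x - 1 ≠ x := by
  intro h
  simpa [h] using val_sub_sub_one_self hk x

end Fin

section Protocol

variable {k : Fin n → ℕ} {a b c : ∀ j, Fin (k j)}

lemma moveOn_iff : MoveOn k a b ↔ a ≠ b ∧ ∀ j, ((a j - b j : Fin (k j)) : ℕ) ≤ 1 := by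
  simp only [MoveOn, Fin.val_sub_eq_add_sub_mod]
  exact and_congr_right fun _ => forall_congr' fun _ => by omega

lemma query_iff : Query k a b ↔ ∀ j, ((b j - a j : Fin (k j)) : ℕ) ≤ 2 := by
  simp only [Query, Fin.val_sub_eq_add_sub_mod]
  exact forall_congr' fun _ => by omega

variable [∀ j, NeZero (k j)]

theorem not_moveOn_and_query (hk : ∀ j, 4 ≤ k j) : ¬ (MoveOn k a b ∧ Query k a b) := by
  rintro ⟨hM, hQ⟩
  rw [moveOn_iff] at hM
  obtain ⟨j, hj⟩ := Function.ne_iff.mp hM.1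
  have hd : (a j - b j : Fin (k j)) ≠ 0 := sub_ne_zero.mpr hj
  have hd_pos : 0 < ((a j - b j : Fin (k j)) : ℕ) := Fin.pos_iff_ne_zero.mpr hd
  have hneg := query_iff.mp hQ j
  rw [← neg_sub, Fin.val_neg, if_neg hd] at hneg
  have := hM.2 j
  have := hk j
  omega

theorem query_of_moveOn (hM : MoveOn k a b) (hc : ∀ j, ((c j - a j : Fin (k j)) : ℕ) ≤ 1) :
    Query k b c :=
  query_iff.mpr fun j =>
    (Fin.val_sub_le_val_sub_add_val_sub _ (a j) _).trans
      (Nat.add_le_add (hc j) ((moveOn_iff.mp hM).2 j))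

theorem query_self : Query k b b :=
  query_iff.mpr fun j => by simp

theorem moveOn_of_forall_eq_or_eq_sub_one (hk : ∀ j, 2 ≤ k j)
    (hc : ∀ j, c j = b j ∨ c j = b j - 1) {i : Fin n} (hi : c i = b i - 1) : MoveOn k b c := by
  refine moveOn_iff.mpr ⟨fun hbc => Fin.sub_one_ne_self (hk i) (b i) ?_, fun j => ?_⟩
  · rw [← hi, hbc]
  · rcases hc j with h | h
    · simp [h]
    · rw [h, Fin.val_sub_sub_one_self (hk j)]

end Protocol

theorem stmt13_general (n : ℕ) (k : Fin n → ℕ) [∀ i, NeZero (k i)] (hk : ∀ i, 4 ≤ k i)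
    (u : ∀ i : Fin n, (∀ j, Fin (k j)) → ℝ)
    (π : (∀ j, Fin (k j)) → ∀ j, Fin (k j))
    (hπ : ∀ (a : ∀ j, Fin (k j)) (i : Fin n),
      ((π a i : ℕ) + k i - (a i : ℕ)) % k i = 0 ∨
      ((π a i : ℕ) + k i - (a i : ℕ)) % k i = 1)
    (f : (∀ j, Fin (k j)) → (∀ j, Fin (k j)) → ∀ j, Fin (k j))
    (hfM : ∀ a b : ∀ j, Fin (k j), MoveOn k a b → f a b = π a)
    (hfQ : ∀ a b : ∀ j, Fin (k j), Query k a b → ∀ i : Fin n,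
      f a b i = if IsBR u i (b i) b then b i else b i - 1)
    (hfR : ∀ a b : ∀ j, Fin (k j), ¬ MoveOn k a b → ¬ Query k a b → f a b = b) :
    (∀ a b : ∀ j, Fin (k j), ¬ (MoveOn k a b ∧ Query k a b)) ∧
    (∀ a b : ∀ j, Fin (k j),
      (MoveOn k a b ∨ (¬ MoveOn k a b ∧ ¬ Query k a b)) → Query k b (f a b)) ∧
    (∀ a b : ∀ j, Fin (k j), Query k a b →
      ¬ MoveOn k b (f a b) → ¬ Query k b (f a b) → ∀ i : Fin n, IsBR u i (b i) b) := by
  refine ⟨fun a b => not_moveOn_and_query hk, ?_, ?_⟩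
  · rintro a b (hM | ⟨hnM, hnQ⟩)
    · rw [hfM a b hM]
      refine query_of_moveOn hM fun j => ?_
      rw [Fin.val_sub_eq_add_sub_mod]
      rcases hπ a j with h | h <;> omega
    · rw [hfR a b hnM hnQ]
      exact query_self
  · intro a b hQ hnM _ i
    by_contra hi
    have hk2 : ∀ j, 2 ≤ k j := fun j => le_trans (by norm_num) (hk j)
    refine hnM (moveOn_of_forall_eq_or_eq_sub_one hk2 (fun j => ?_) (i := i) ?_)
    · rw [hfQ a b hQ j]
      split_ifs <;> simp
    · rw [hfQ a b hQ i, if_neg hi]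

/-- With `k j ≥ 4` for all `j`: in the 2-recall protocol where at a move-on history
`(a,b)` each node plays `π a i` (`π` the lexicographic successor), at a query history
node `i` plays `b i` if `b i` is a best response at `b` and `b i − 1 (mod k i)`
otherwise, and at a repeat history (neither move-on nor query) each node repeats
`b i`: the move-on and query conditions are mutually exclusive, every move-on or
repeat history is followed by a query history, and a query history `(a,b)` is followed
by a repeat history only if every node is best-responding at `b`. -/
theorem stmt13 (n : ℕ) (k : Fin n → ℕ) [∀ i, NeZero (k i)] (hk : ∀ i, 4 ≤ k i)
    (u : ∀ i : Fin n, (∀ j, Fin (k j)) → ℝ)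
    (π : (∀ j, Fin (k j)) → ∀ j, Fin (k j))
    (hπlex : ∀ (a : ∀ j, Fin (k j)) (i : Fin n),
      π a i = if ∀ j, i < j → (a j : ℕ) = k j - 1 then a i + 1 else a i)
    (hπ : ∀ (a : ∀ j, Fin (k j)) (i : Fin n),
      ((π a i : ℕ) + k i - (a i : ℕ)) % k i = 0 ∨
      ((π a i : ℕ) + k i - (a i : ℕ)) % k i = 1)
    (f : (∀ j, Fin (k j)) → (∀ j, Fin (k j)) → ∀ j, Fin (k j))
    (hfM : ∀ a b : ∀ j, Fin (k j), MoveOn k a b → f a b = π a)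
    (hfQ : ∀ a b : ∀ j, Fin (k j), Query k a b → ∀ i : Fin n,
      f a b i = if IsBR u i (b i) b then b i else b i - 1)
    (hfR : ∀ a b : ∀ j, Fin (k j), ¬ MoveOn k a b → ¬ Query k a b → f a b = b) :
    (∀ a b : ∀ j, Fin (k j), ¬ (MoveOn k a b ∧ Query k a b)) ∧
    (∀ a b : ∀ j, Fin (k j),
      (MoveOn k a b ∨ (¬ MoveOn k a b ∧ ¬ Query k a b)) → Query k b (f a b)) ∧
    (∀ a b : ∀ j, Fin (k j), Query k a b →
      ¬ MoveOn k b (f a b) → ¬ Query k b (f a b) → ∀ i : Fin n, IsBR u i (b i) b) :=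
  stmt13_general n k hk u π hπ f hfM hfQ hfR
end
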